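/- The Fourier coefficients of the Painlevé V weight satisfy the identity (ν+1)·( w_0(t)² − w_1(t)·w_{−1}(t) ) + t·( w_{−1}(t)² − w_{−2}(t)·w_0(t) ) − w_{−1}(t)·w_0(t) = w_0(t)²; equivalently, when w_0(t) ≠ 0, (ν+1)·(1 − w_{−1}w_1/w_0²) + t·((w_{−1}/w_0)² − w_{−2}/w_0) − w_{−1}/w_0 = 1. -/

import Mathlib

open scoped BigOperators

/-- The Fourier coefficients of the Painlevé V weight
`w(z) = z^{(μ−ν)/2} |1+z|^{μ+ν} e^{tz}` on the unit circle:
`w_k(t) = (1/2π) ∫_{−π}^{π} e^{i(μ−ν)θ/2} (2+2cos θ)^{(μ+ν)/2} e^{t e^{iθ}} e^{−ikθ} dθ`. -/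
noncomputable def wV (μ ν t : ℝ) (k : ℤ) : ℂ :=
  ((1 / (2 * Real.pi) : ℝ) : ℂ) *
    ∫ θ in (-Real.pi)..Real.pi,
      Complex.exp (Complex.I * (((μ - ν) / 2 * θ : ℝ) : ℂ)) *
        (((2 + 2 * Real.cos θ) ^ ((μ + ν) / 2) : ℝ) : ℂ) *
        Complex.exp ((t : ℂ) * Complex.exp (Complex.I * (θ : ℂ))) *
        Complex.exp (-(Complex.I * (((k : ℝ) * θ : ℝ) : ℂ)))

/-- The Toeplitz determinant `D^ε_N(t) = det[ w_{−ε+j−k}(t) ]_{0≤j,k≤N−1}`,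
with `D^ε_0(t) = 1` (the empty determinant). -/
noncomputable def toeplitzDetV (μ ν t : ℝ) (ε : ℤ) (N : ℕ) : ℂ :=
  Matrix.det (Matrix.of fun j k : Fin N => wV μ ν t (-ε + (j : ℤ) - (k : ℤ)))

/-- The reflection coefficient `r_N(t) = (−1)^N D^1_N(t)/D^0_N(t)`. -/
noncomputable def rV (μ ν t : ℝ) (N : ℕ) : ℂ :=
  (-1) ^ N * toeplitzDetV μ ν t 1 N / toeplitzDetV μ ν t 0 N

/-- The reflection coefficient `r̄_N(t) = (−1)^N D^{−1}_N(t)/D^0_N(t)`. -/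
noncomputable def rbV (μ ν t : ℝ) (N : ℕ) : ℂ :=
  (-1) ^ N * toeplitzDetV μ ν t (-1) N / toeplitzDetV μ ν t 0 N

/-!
Write `z = e^{iθ}` and `f_k` for the integrand of `w_k`, so that `f_{k-1} = z f_k` and
`2 + 2 cos θ = |1 + z|²`. Differentiating `(1 + z) f_k` gives
`i ((-ν - k) f_k + (μ + 1 + t - k) f_{k-1} + t f_{k-2})`. Since
`|(1 + z) f_k| = |1 + z|^{μ+ν+1} e^{t cos θ}` and `μ + ν > -1`, this product vanishes at `θ = ±π`,
so integrating over `[-π, π]` yields the three-term recurrence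
`(-ν - k) w_k + (μ + 1 + t - k) w_{k-1} + t w_{k-2} = 0`. The identity is the combination
`w_{-1} · (k = 1) - w_0 · (k = 0)` of two instances of it.
-/

open Complex Real Set Filter Topology MeasureTheory
open scoped Interval

lemma four_div_pi_sq_mul_le_two_add_two_cos {θ : ℝ} (hθ : |θ| ≤ π) :
    4 / π ^ 2 * (π - |θ|) ^ 2 ≤ 2 + 2 * Real.cos θ := by
  have h := Real.cos_le_one_sub_mul_cos_sq (x := π - |θ|)
    (by rw [abs_of_nonneg (by linarith)]; linarith [abs_nonneg θ])
  rw [Real.cos_pi_sub, Real.cos_abs] at h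
  linarith [show 4 / π ^ 2 * (π - |θ|) ^ 2 = 2 * (2 / π ^ 2 * (π - |θ|) ^ 2) by ring]

lemma two_add_two_cos_pos {θ : ℝ} (hθ : |θ| < π) : 0 < 2 + 2 * Real.cos θ :=
  have : 0 < π - |θ| := by linarith
  lt_of_lt_of_le (by positivity) (four_div_pi_sq_mul_le_two_add_two_cos hθ.le)

lemma two_add_two_cos_rpow_le {s θ : ℝ} (hs : s < 0) (hθ : |θ| ≤ π) :
    (2 + 2 * Real.cos θ) ^ s ≤ (4 / π ^ 2) ^ s * ((π - θ) ^ (2 * s) + (π + θ) ^ (2 * s)) := by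
  obtain ⟨hθl, hθr⟩ := abs_le.1 hθ
  rcases hθ.eq_or_lt with hπ | hπ
  · have hcos : Real.cos θ = -1 := by rw [← Real.cos_abs, hπ, Real.cos_pi]
    rw [hcos, show (2 : ℝ) + 2 * -1 = 0 by norm_num, zero_rpow hs.ne]
    exact mul_nonneg (by positivity)
      (add_nonneg (rpow_nonneg (by linarith) _) (rpow_nonneg (by linarith) _))
  have hdist : (π - |θ|) ^ (2 * s) ≤ (π - θ) ^ (2 * s) + (π + θ) ^ (2 * s) := by
    rcases abs_cases θ with ⟨h, -⟩ | ⟨h, -⟩ <;> rw [h]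
    · linarith [rpow_nonneg (by linarith : 0 ≤ π + θ) (2 * s)]
    · rw [sub_neg_eq_add]; linarith [rpow_nonneg (by linarith : 0 ≤ π - θ) (2 * s)]
  have hpos : 0 < π - |θ| := by linarith
  calc (2 + 2 * Real.cos θ) ^ s ≤ (4 / π ^ 2 * (π - |θ|) ^ 2) ^ s :=
        rpow_le_rpow_of_nonpos (by positivity) (four_div_pi_sq_mul_le_two_add_two_cos hθ) hs.le
    _ = (4 / π ^ 2) ^ s * (π - |θ|) ^ (2 * s) := by
        rw [mul_rpow (by positivity) (by positivity), ← rpow_natCast (π - |θ|),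
          ← rpow_mul hpos.le]
        norm_num
    _ ≤ _ := mul_le_mul_of_nonneg_left hdist (by positivity)

lemma intervalIntegrable_two_add_two_cos_rpow {s : ℝ} (hs : -(1 / 2) < s) :
    IntervalIntegrable (fun θ => (2 + 2 * Real.cos θ) ^ s) volume (-π) π := by
  have hmeas : AEStronglyMeasurable (fun θ : ℝ => (2 + 2 * Real.cos θ) ^ s)
      (volume.restrict (Ι (-π) π)) := (by fun_prop : Measurable _).aestronglyMeasurable
  have hbase : ∀ θ, 0 ≤ 2 + 2 * Real.cos θ := fun θ => by linarith [Real.neg_one_le_cos θ]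
  rcases le_or_gt 0 s with hs0 | hs0
  · refine IntervalIntegrable.mono_fun' (g := fun _ => (4 : ℝ) ^ s) intervalIntegrable_const
      hmeas (ae_of_all _ fun θ => ?_)
    show ‖_‖ ≤ _
    rw [norm_of_nonneg (rpow_nonneg (hbase θ) s)]
    exact rpow_le_rpow (hbase θ) (by linarith [Real.cos_le_one θ]) hs0
  · have hpow : IntervalIntegrable (fun x : ℝ => x ^ (2 * s)) volume 0 (2 * π) :=
      intervalIntegral.intervalIntegrable_rpow' (by linarith)
    have hsub := hpow.comp_sub_left π
    have hadd := hpow.comp_add_left π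
    rw [sub_zero, show π - 2 * π = -π by ring] at hsub
    rw [zero_sub, show 2 * π - π = π by ring] at hadd
    refine IntervalIntegrable.mono_fun' ((hsub.symm.add hadd).const_mul ((4 / π ^ 2) ^ s))
      hmeas ?_
    rw [EventuallyLE, ae_restrict_iff' measurableSet_uIoc]
    refine ae_of_all _ fun θ hθ => ?_
    rw [uIoc_of_le (by linarith [pi_pos])] at hθ
    rw [norm_of_nonneg (rpow_nonneg (hbase θ) s)]
    exact two_add_two_cos_rpow_le hs0 (abs_le.2 ⟨hθ.1.le, hθ.2⟩)

lemma norm_one_add_exp_I_mul (θ : ℝ) : ‖1 + exp (I * θ)‖ = √(2 + 2 * Real.cos θ) := by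
  rw [mul_comm, exp_mul_I, ← ofReal_cos, ← ofReal_sin, norm_def, ← ofReal_one, ← add_assoc,
    ← ofReal_add, normSq_add_mul_I]
  congr 1
  nlinarith [Real.sin_sq_add_cos_sq θ]

lemma one_add_exp_I_mul_mul_sin (z : ℂ) :
    (1 + exp (I * z)) * (-2 * Complex.sin z)
      = I * (exp (I * z) - 1) * (2 + 2 * Complex.cos z) := by
  rw [mul_comm I, exp_mul_I]
  linear_combination (-2 * I) * Complex.sin_sq_add_cos_sq z
    - (2 * Complex.sin z + 2 * Complex.cos z * Complex.sin z) * I_sq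

lemma hasDerivAt_exp_I_mul (θ : ℝ) :
    HasDerivAt (fun x : ℝ => exp (I * x)) (I * exp (I * θ)) θ := by
  simpa [mul_comm] using ((hasDerivAt_id θ).ofReal_comp.const_mul I).cexp

lemma hasDerivAt_one_add_exp_I_mul_mul_rpow (s : ℝ) {θ : ℝ} (hθ : 0 < 2 + 2 * Real.cos θ) :
    HasDerivAt (fun x : ℝ => (1 + exp (I * x)) * (((2 + 2 * Real.cos x) ^ s : ℝ) : ℂ))
      (I * ((1 + s) * exp (I * θ) - s) * (((2 + 2 * Real.cos θ) ^ s : ℝ) : ℂ)) θ := by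
  have hbase : HasDerivAt (fun x => 2 + 2 * Real.cos x) (-2 * Real.sin θ) θ := by
    simpa using ((Real.hasDerivAt_cos θ).const_mul 2).const_add 2
  have hweight :=
    ((Real.hasDerivAt_rpow_const (p := s) (Or.inl hθ.ne')).comp θ hbase).ofReal_comp
  simp only [Function.comp_def] at hweight
  refine ((hasDerivAt_exp_I_mul θ).const_add 1).mul hweight |>.congr_deriv ?_
  have hsplit :
      (2 + 2 * Real.cos θ) ^ s = (2 + 2 * Real.cos θ) ^ (s - 1) * (2 + 2 * Real.cos θ) := by
    rw [rpow_sub_one hθ.ne', div_mul_cancel₀ _ hθ.ne']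
  rw [hsplit]
  push_cast
  linear_combination (s * ((2 + 2 * Real.cos θ) ^ (s - 1) : ℝ)) * one_add_exp_I_mul_mul_sin θ

noncomputable def wVIntegrand (μ ν t : ℝ) (k : ℤ) (θ : ℝ) : ℂ :=
  Complex.exp (Complex.I * (((μ - ν) / 2 * θ : ℝ) : ℂ)) *
    (((2 + 2 * Real.cos θ) ^ ((μ + ν) / 2) : ℝ) : ℂ) *
    Complex.exp ((t : ℂ) * Complex.exp (Complex.I * (θ : ℂ))) *
    Complex.exp (-(Complex.I * (((k : ℝ) * θ : ℝ) : ℂ)))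

section wVIntegrand

variable (μ ν t : ℝ) (k : ℤ)

lemma wV_eq_integral :
    wV μ ν t k = ((1 / (2 * π) : ℝ) : ℂ) * ∫ θ in (-π)..π, wVIntegrand μ ν t k θ :=
  rfl

lemma wVIntegrand_eq (θ : ℝ) :
    wVIntegrand μ ν t k θ = exp (I * ((μ - ν) / 2 - k) * θ + t * exp (I * θ)) *
      (((2 + 2 * Real.cos θ) ^ ((μ + ν) / 2) : ℝ) : ℂ) := by
  simp only [wVIntegrand, Complex.exp_add]
  push_cast
  rw [show I * ((μ - ν) / 2 - k) * θ = I * ((μ - ν) / 2 * θ) + -(I * (k * θ)) by ring,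
    Complex.exp_add]
  ring

lemma wVIntegrand_sub_one (θ : ℝ) :
    wVIntegrand μ ν t (k - 1) θ = exp (I * θ) * wVIntegrand μ ν t k θ := by
  rw [wVIntegrand_eq, wVIntegrand_eq, ← mul_assoc, ← Complex.exp_add]
  push_cast
  ring_nf

lemma norm_wVIntegrand (θ : ℝ) :
    ‖wVIntegrand μ ν t k θ‖
      = (2 + 2 * Real.cos θ) ^ ((μ + ν) / 2) * Real.exp (t * Real.cos θ) := by
  rw [wVIntegrand_eq, norm_mul, norm_exp, norm_real, Real.norm_eq_abs,
    abs_of_nonneg (rpow_nonneg (by linarith [Real.neg_one_le_cos θ]) _), mul_comm]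
  congr 2
  simp [Complex.exp_re]

lemma intervalIntegrable_wVIntegrand (hμν : -1 < μ + ν) :
    IntervalIntegrable (wVIntegrand μ ν t k) volume (-π) π := by
  have hweight := intervalIntegrable_two_add_two_cos_rpow (s := (μ + ν) / 2) (by linarith)
  have hweightℂ : IntervalIntegrable
      (fun θ => (((2 + 2 * Real.cos θ) ^ ((μ + ν) / 2) : ℝ) : ℂ)) volume (-π) π :=
    ⟨hweight.1.ofReal, hweight.2.ofReal⟩
  simpa only [← wVIntegrand_eq] using hweightℂ.continuousOn_mul (show ContinuousOn
    (fun θ : ℝ => exp (I * ((μ - ν) / 2 - k) * θ + t * exp (I * θ))) _ by fun_prop)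

lemma hasDerivAt_one_add_exp_I_mul_mul_wVIntegrand {θ : ℝ} (hθ : 0 < 2 + 2 * Real.cos θ) :
    HasDerivAt (fun x : ℝ => (1 + exp (I * x)) * wVIntegrand μ ν t k x)
      (I * ((-ν - k) * wVIntegrand μ ν t k θ + (μ + 1 + t - k) * wVIntegrand μ ν t (k - 1) θ
        + t * wVIntegrand μ ν t (k - 2) θ)) θ := by
  have hphase : HasDerivAt (fun x : ℝ => exp (I * ((μ - ν) / 2 - k) * x + t * exp (I * x)))
      ((I * ((μ - ν) / 2 - k) + t * (I * exp (I * θ)))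
        * exp (I * ((μ - ν) / 2 - k) * θ + t * exp (I * θ))) θ := by
    have hlin := (hasDerivAt_id θ).ofReal_comp.const_mul (I * ((μ - ν) / 2 - k))
    simpa [mul_comm] using (hlin.add ((hasDerivAt_exp_I_mul θ).const_mul (t : ℂ))).cexp
  have hprod := (hasDerivAt_one_add_exp_I_mul_mul_rpow ((μ + ν) / 2) hθ).mul hphase
  have hfun : (fun x : ℝ => (1 + exp (I * x)) * wVIntegrand μ ν t k x)
      = (fun x : ℝ => (1 + exp (I * x)) * (((2 + 2 * Real.cos x) ^ ((μ + ν) / 2) : ℝ) : ℂ))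
        * fun x : ℝ => exp (I * ((μ - ν) / 2 - k) * x + t * exp (I * x)) := by
    funext x
    rw [Pi.mul_apply, wVIntegrand_eq]
    ring
  rw [show k - 2 = k - 1 - 1 by ring, wVIntegrand_sub_one μ ν t (k - 1),
    wVIntegrand_sub_one μ ν t k, hfun, wVIntegrand_eq]
  refine hprod.congr_deriv ?_
  push_cast
  ring

lemma tendsto_one_add_exp_I_mul_mul_wVIntegrand (hμν : -1 < μ + ν) {θ₀ : ℝ}
    (hθ₀ : Real.cos θ₀ = -1) :
    Tendsto (fun x : ℝ => (1 + exp (I * x)) * wVIntegrand μ ν t k x) (𝓝 θ₀) (𝓝 0) := by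
  have hp : 0 < (μ + ν) / 2 + 1 / 2 := by linarith
  set p := (μ + ν) / 2 + 1 / 2
  have hbase : ∀ x, 0 ≤ 2 + 2 * Real.cos x := fun x => by linarith [Real.neg_one_le_cos x]
  have hnorm : ∀ x : ℝ, ‖(1 + exp (I * x)) * wVIntegrand μ ν t k x‖
      = (2 + 2 * Real.cos x) ^ p * Real.exp (t * Real.cos x) := fun x => by
    rw [norm_mul, norm_one_add_exp_I_mul, norm_wVIntegrand, sqrt_eq_rpow,
      rpow_add' (hbase x) hp.ne', ← mul_assoc, mul_comm (_ ^ (1 / 2 : ℝ))]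
  have hcont : Continuous fun x => (2 + 2 * Real.cos x) ^ p * Real.exp (t * Real.cos x) :=
    ((by fun_prop : Continuous fun x => 2 + 2 * Real.cos x).rpow_const
      fun _ => Or.inr hp.le).mul (by fun_prop)
  have hlimit : (2 + 2 * Real.cos θ₀) ^ p * Real.exp (t * Real.cos θ₀) = 0 := by
    rw [hθ₀, show (2 : ℝ) + 2 * -1 = 0 by norm_num, zero_rpow hp.ne', zero_mul]
  rw [tendsto_zero_iff_norm_tendsto_zero]
  simpa only [hnorm, hlimit] using hcont.tendsto θ₀

lemma wV_recurrence (hμν : -1 < μ + ν) :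
    (-ν - k) * wV μ ν t k + (μ + 1 + t - k) * wV μ ν t (k - 1) + t * wV μ ν t (k - 2)
      = 0 := by
  have hint := fun j => intervalIntegrable_wVIntegrand μ ν t j hμν
  have hftc := intervalIntegral.integral_eq_sub_of_hasDerivAt_of_tendsto (neg_lt_self pi_pos)
    (fun θ hθ => hasDerivAt_one_add_exp_I_mul_mul_wVIntegrand μ ν t k
      (two_add_two_cos_pos (abs_lt.2 hθ)))
    ((((hint k).const_mul _).add ((hint (k - 1)).const_mul _)).add
      ((hint (k - 2)).const_mul _) |>.const_mul I)
    ((tendsto_one_add_exp_I_mul_mul_wVIntegrand μ ν t k hμν (θ₀ := -π) (by simp)).mono_left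
      nhdsWithin_le_nhds)
    ((tendsto_one_add_exp_I_mul_mul_wVIntegrand μ ν t k hμν (θ₀ := π) (by simp)).mono_left
      nhdsWithin_le_nhds)
  rw [sub_self, intervalIntegral.integral_const_mul,
    intervalIntegral.integral_add ((hint k).const_mul _ |>.add ((hint (k - 1)).const_mul _))
      ((hint (k - 2)).const_mul _),
    intervalIntegral.integral_add ((hint k).const_mul _) ((hint (k - 1)).const_mul _)] at hftc
  simp only [intervalIntegral.integral_const_mul] at hftc
  rw [wV_eq_integral, wV_eq_integral, wV_eq_integral]
  linear_combination ((1 / (2 * π) : ℝ) : ℂ) * (mul_eq_zero.1 hftc).resolve_left I_ne_zero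

end wVIntegrand

theorem stmt8 (t μ ν : ℝ) (hμν : -1 < μ + ν) :
    ((ν : ℂ) + 1) * ((wV μ ν t 0) ^ 2 - wV μ ν t 1 * wV μ ν t (-1))
      + (t : ℂ) * ((wV μ ν t (-1)) ^ 2 - wV μ ν t (-2) * wV μ ν t 0)
      - wV μ ν t (-1) * wV μ ν t 0 = (wV μ ν t 0) ^ 2
    ∧ (wV μ ν t 0 ≠ 0 →
        ((ν : ℂ) + 1) * (1 - wV μ ν t (-1) * wV μ ν t 1 / (wV μ ν t 0) ^ 2)
          + (t : ℂ) * ((wV μ ν t (-1) / wV μ ν t 0) ^ 2 - wV μ ν t (-2) / wV μ ν t 0)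
          - wV μ ν t (-1) / wV μ ν t 0 = 1) := by
  have r0 := wV_recurrence μ ν t 0 hμν
  have r1 := wV_recurrence μ ν t 1 hμν
  norm_num at r0 r1
  refine ⟨by linear_combination wV μ ν t (-1) * r1 - wV μ ν t 0 * r0, fun h0 => ?_⟩
  field_simp
  linear_combination wV μ ν t (-1) * r1 - wV μ ν t 0 * r0
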